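/- (Addition formula.) For all integers m ≥ 0, k ≥ 1 and all real numbers x and y, E_{m,q}^{(0,k)}(x+y) = Σ_{j=0}^{m} C(m,j) [y]_q^{m−j} q^{jy} E_{j,q}^{(0,k)}(x). -/

import Mathlib

open Finset

/-- The q-number `[x]_q = (1 - q^x)/(1 - q)`, with `q^x = exp (x * log q)` (rpow). -/
noncomputable def qNum (q x : ℝ) : ℝ := (1 - q ^ x) / (1 - q)

/-- `[l]_{-q} = (1 - (-q)^l)/(1 + q)` for a natural number `l`. -/
noncomputable def qNumNeg (q : ℝ) (l : ℕ) : ℝ := (1 - (-q) ^ l) / (1 + q)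

/-- The higher-order q-Euler polynomial
`E_{m,q}^{(h,k)}(x) = ((1+q)^k/(1-q)^m) * Σ_{j=0}^m C(m,j) (-1)^j q^{jx} / Π_{i=0}^{k-1} (1 + q^{h+j-i})`. -/
noncomputable def qE (q : ℝ) (h : ℤ) (k m : ℕ) (x : ℝ) : ℝ :=
  ((1 + q) ^ k / (1 - q) ^ m) *
    ∑ j ∈ Finset.range (m + 1),
      (m.choose j : ℝ) * (-1) ^ j * q ^ ((j : ℝ) * x) /
        ∏ i ∈ Finset.range k, (1 + q ^ ((h : ℝ) + (j : ℝ) - (i : ℝ)))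


/-! With `u = q^x` and `c = q^y`, `E_m(x)` is `(1+q)^k/(1-q)^m · Σ_j C(m,j) w_j u^j` for weights
`w_j` not depending on `x`, and `[y]_q^{m-j}/(1-q)^j = (1-c)^{m-j}/(1-q)^m`. The addition formula
thus reduces to the binomial identity
`Σ_j C(m,j) (1-c)^{m-j} c^j Σ_l C(j,l) f_l = Σ_l C(m,l) c^l f_l`, which follows from
`C(m,j) C(j,l) = C(m,l) C(m-l,j-l)` and `((1-c) + c)^{m-l} = 1`. -/

section BinomialSums

variable {R : Type*} [CommSemiring R]

theorem sum_choose_mul_choose_mul_pow_mul_pow (a b : R) (m l : ℕ) :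
    ∑ j ∈ range (m + 1), (m.choose j : R) * j.choose l * a ^ (m - j) * b ^ j =
      m.choose l * b ^ l * (a + b) ^ (m - l) := by
  rcases lt_or_ge m l with hml | hlm
  · rw [Nat.choose_eq_zero_of_lt hml, Nat.cast_zero, zero_mul, zero_mul]
    refine sum_eq_zero fun j hj => ?_
    rw [Nat.choose_eq_zero_of_lt (show j < l by rw [mem_range] at hj; omega)]
    simp
  have hbelow : ∀ j ∈ range l, (m.choose j : R) * j.choose l * a ^ (m - j) * b ^ j = 0 :=
    fun j hj => by rw [Nat.choose_eq_zero_of_lt (mem_range.mp hj)]; simp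
  rw [← sum_range_add_sum_Ico _ (by omega : l ≤ m + 1), sum_eq_zero hbelow, zero_add,
    sum_Ico_eq_sum_range, add_comm a b, add_pow, mul_sum, show m + 1 - l = m - l + 1 by omega]
  refine sum_congr rfl fun t _ => ?_
  have hchoose : (m.choose (l + t) : R) * (l + t).choose l = m.choose l * (m - l).choose t := by
    have := Nat.choose_mul (n := m) (Nat.le_add_right l t)
    rw [Nat.add_sub_cancel_left] at this
    rw [← Nat.cast_mul, ← Nat.cast_mul, this]
  calc (m.choose (l + t) : R) * (l + t).choose l * a ^ (m - (l + t)) * b ^ (l + t)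
      = (m.choose (l + t) * (l + t).choose l : R) * b ^ l * (b ^ t * a ^ (m - l - t)) := by
        rw [show m - (l + t) = m - l - t by omega, pow_add]; ring
    _ = _ := by rw [hchoose]; ring

theorem sum_choose_mul_pow_mul_sum_choose (a b : R) (f : ℕ → R) (m : ℕ) :
    ∑ j ∈ range (m + 1), (m.choose j : R) * a ^ (m - j) * b ^ j *
        ∑ l ∈ range (j + 1), (j.choose l : R) * f l =
      ∑ l ∈ range (m + 1), (m.choose l : R) * b ^ l * (a + b) ^ (m - l) * f l := by
  have hextend : ∀ j ∈ range (m + 1),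
      ∑ l ∈ range (j + 1), (j.choose l : R) * f l =
        ∑ l ∈ range (m + 1), (j.choose l : R) * f l := by
    intro j hj
    refine sum_subset (range_subset_range.mpr (mem_range.mp hj)) fun l _ hl => ?_
    rw [Nat.choose_eq_zero_of_lt (show j < l by simpa using hl), Nat.cast_zero, zero_mul]
  rw [sum_congr rfl fun j hj => by rw [hextend j hj, mul_sum], sum_comm]
  refine sum_congr rfl fun l _ => ?_
  rw [← sum_choose_mul_choose_mul_pow_mul_pow, sum_mul]
  exact sum_congr rfl fun j _ => by ring

end BinomialSums

noncomputable def qECoeff (q : ℝ) (h : ℤ) (k j : ℕ) : ℝ :=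
  (-1) ^ j / ∏ i ∈ range k, (1 + q ^ ((h : ℝ) + (j : ℝ) - (i : ℝ)))

theorem qE_eq_sum_rpow_pow {q : ℝ} (hq : 0 ≤ q) (h : ℤ) (k m : ℕ) (x : ℝ) :
    qE q h k m x =
      (1 + q) ^ k / (1 - q) ^ m *
        ∑ j ∈ range (m + 1), (m.choose j : ℝ) * (q ^ x) ^ j * qECoeff q h k j := by
  rw [qE]
  congr 1
  refine sum_congr rfl fun j _ => ?_
  rw [mul_comm (j : ℝ), Real.rpow_mul_natCast hq, qECoeff]
  ring

theorem stmt_4 (q : ℝ) (hq : 0 < q) (m k : ℕ) (x y : ℝ) :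
    qE q 0 k m (x + y) =
      ∑ j ∈ Finset.range (m + 1),
        (m.choose j : ℝ) * qNum q y ^ (m - j) * q ^ ((j : ℝ) * y) * qE q 0 k j x := by
  set f : ℕ → ℝ := fun l => (q ^ x) ^ l * qECoeff q 0 k l
  calc qE q 0 k m (x + y)
      = (1 + q) ^ k / (1 - q) ^ m *
          ∑ l ∈ range (m + 1), (m.choose l : ℝ) * (q ^ y) ^ l * f l := by
        rw [qE_eq_sum_rpow_pow hq.le, Real.rpow_add hq]
        simp only [f, mul_pow]
        congr 1
        exact sum_congr rfl fun l _ => by ring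
    _ = (1 + q) ^ k / (1 - q) ^ m * ∑ j ∈ range (m + 1),
          (m.choose j : ℝ) * (1 - q ^ y) ^ (m - j) * (q ^ y) ^ j *
            ∑ l ∈ range (j + 1), (j.choose l : ℝ) * f l := by
        rw [sum_choose_mul_pow_mul_sum_choose, sub_add_cancel]
        simp only [one_pow, mul_one]
    _ = _ := by
        rw [mul_sum]
        refine sum_congr rfl fun j hj => ?_
        rw [qE_eq_sum_rpow_pow hq.le, qNum, mul_comm (j : ℝ), Real.rpow_mul_natCast hq.le,
          div_pow, ← pow_sub_mul_pow (1 - q) (Nat.lt_succ_iff.mp (mem_range.mp hj))]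
        simp only [f, mul_assoc]
        ring
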